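/- arXiv:math/0502496 — 2 statements merged into one kernel-verified Lean document; each statement's English description precedes it below -/
import Mathlib

section
/- If G is fully residually free and non-abelian, then G contains a free subgroup of rank 2. -/
/-!
Take non-commuting `a b : G`. Full residual freeness, applied to the single non-trivial element
`⁅a, b⁆`, gives `f : G →* F` with `F` free and `f a`, `f b` not commuting. By Nielsen–Schreier the
range of `f` is free, and being non-abelian it has at least two basis elements, which span a free
subgroup of rank 2. Since free groups are projective, this subgroup lifts along `f` to `G`, and the
lift is injective because its composite with `f` is.
-/

/-- A group `G` is fully residually free if any finitely many non-trivial elements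
can simultaneously be mapped to non-trivial elements of some free group. -/
def FullyResiduallyFree (G : Type*) [Group G] : Prop :=
  ∀ (n : ℕ) (g : Fin n → G), (∀ i, g i ≠ 1) →
    ∃ (α : Type) (f : G →* FreeGroup α), ∀ i, f (g i) ≠ 1

open Function
open scoped commutatorElement

namespace FreeGroup

variable {α : Type*}

theorem commute_of_subsingleton [Subsingleton α] (x y : FreeGroup α) : Commute x y := by
  cases isEmpty_or_nonempty α
  · exact Subsingleton.elim (x * y) (y * x)
  · have : Unique α := (nonempty_unique α).some
    exact IsCyclic.commGroup.mul_comm x y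

theorem exists_injective_freeGroup_fin_two [Nontrivial α] :
    ∃ f : FreeGroup (Fin 2) →* FreeGroup α, Injective f := by
  obtain ⟨i, j, hij⟩ := exists_pair_ne α
  refine ⟨map ![i, j], map_injective ?_⟩
  intro k l
  fin_cases k <;> fin_cases l <;> simp [hij, hij.symm]

theorem exists_comp_eq_of_surjective {G K : Type*} [Group G] [Group K] {p : G →* K}
    (hp : Surjective p) (ψ : FreeGroup α →* K) : ∃ φ : FreeGroup α →* G, p.comp φ = ψ := by
  choose s hs using hp
  exact ⟨lift (s ∘ ψ ∘ of), ext_hom _ _ fun i => by simp [hs]⟩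

end FreeGroup

theorem IsFreeGroup.exists_injective_freeGroup_fin_two {H : Type*} [Group H] [IsFreeGroup H]
    {x y : H} (h : ¬Commute x y) : ∃ f : FreeGroup (Fin 2) →* H, Injective f := by
  let e := IsFreeGroup.toFreeGroup H
  have : Nontrivial (IsFreeGroup.Generators H) := by
    by_contra hsub
    rw [not_nontrivial_iff_subsingleton] at hsub
    exact h (by simpa using (FreeGroup.commute_of_subsingleton (e x) (e y)).map e.symm)
  obtain ⟨f, hf⟩ := FreeGroup.exists_injective_freeGroup_fin_two (α := IsFreeGroup.Generators H)
  exact ⟨e.symm.toMonoidHom.comp f, e.symm.injective.comp hf⟩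

theorem MonoidHom.exists_injective_freeGroup_fin_two_of_not_commute {G α : Type*} [Group G]
    (f : G →* FreeGroup α) {a b : G} (h : ¬Commute (f a) (f b)) :
    ∃ φ : FreeGroup (Fin 2) →* G, Injective φ := by
  have hab : ¬Commute (f.rangeRestrict a) (f.rangeRestrict b) := fun hc =>
    h (by simpa using hc.map f.range.subtype)
  obtain ⟨ψ, hψ⟩ := IsFreeGroup.exists_injective_freeGroup_fin_two hab
  obtain ⟨φ, hφ⟩ := FreeGroup.exists_comp_eq_of_surjective f.rangeRestrict_surjective ψ
  refine ⟨φ, Injective.of_comp (f := f.rangeRestrict) ?_⟩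
  rwa [← MonoidHom.coe_comp, hφ]

theorem frf_nonabelian_free_subgroup (G : Type*) [Group G]
    (hFRF : FullyResiduallyFree G) (hNA : ¬ ∀ a b : G, a * b = b * a) :
    ∃ f : FreeGroup (Fin 2) →* G, Function.Injective f := by
  obtain ⟨a, b, hab⟩ : ∃ a b : G, ¬Commute a b := by simpa [commute_iff_eq] using hNA
  obtain ⟨α, f, hf⟩ :=
    hFRF 1 (fun _ => (⁅a, b⁆ : G)) fun _ => commutatorElement_eq_one_iff_commute.not.mpr hab
  refine f.exists_injective_freeGroup_fin_two_of_not_commute (a := a) (b := b) ?_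
  rw [← commutatorElement_eq_one_iff_commute, ← map_commutatorElement]
  exact hf 0
end

section
/- Every fully residually free group is residually free, and a residually free group is fully residually free if and only if it is commutative transitive. -/
/-- A group `G` is residually free if any non-trivial element can be mapped to a
non-trivial element of some free group. -/
def ResiduallyFree (G : Type*) [Group G] : Prop :=
  ∀ g : G, g ≠ 1 → ∃ (α : Type) (f : G →* FreeGroup α), f g ≠ 1
/-- Commutation is transitive on non-trivial elements. -/
def CommTransitive (G : Type*) [Group G] : Prop :=
  ∀ a b c : G, b ≠ 1 → a * b = b * a → b * c = c * b → a * c = c * a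

namespace FreeGroup

variable {α : Type*}

theorem not_commute_of_ne {s t : α} (h : s ≠ t) : ¬Commute (of s) (of t) := by
  classical
  intro hc
  have := congrArg
    (lift fun a => if a = s then Equiv.swap (0 : Fin 3) 1 else if a = t then Equiv.swap 1 2 else 1)
    hc.eq
  simp [Ne.symm h] at this
  exact absurd this (by decide)

theorem subsingleton_of_isMulCommutative [IsMulCommutative (FreeGroup α)] : Subsingleton α :=
  ⟨fun _ _ => by_contra fun h => not_commute_of_ne h (mul_comm' _ _)⟩

instance isCyclic_of_subsingleton [Subsingleton α] : IsCyclic (FreeGroup α) := by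
  cases isEmpty_or_nonempty α
  · infer_instance
  · have : Unique α := uniqueOfSubsingleton (Classical.arbitrary α)
    infer_instance

end FreeGroup

namespace IsFreeGroup

variable (G : Type*) [Group G] [IsFreeGroup G] [IsMulCommutative G]

theorem subsingleton_generators : Subsingleton (Generators G) :=
  have : IsMulCommutative (FreeGroup (Generators G)) :=
    ⟨⟨fun a b => (toFreeGroup G).symm.injective (by simp only [map_mul, mul_comm'])⟩⟩
  FreeGroup.subsingleton_of_isMulCommutative

theorem isCyclic_of_isMulCommutative : IsCyclic G :=
  have := subsingleton_generators G
  isCyclic_of_surjective (toFreeGroup G).symm (toFreeGroup G).symm.surjective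

theorem nonempty_mulEquiv_int [Nontrivial G] : Nonempty (G ≃* Multiplicative ℤ) := by
  have := subsingleton_generators G
  cases isEmpty_or_nonempty (Generators G)
  · exact absurd (toFreeGroup G).injective.subsingleton (not_subsingleton G)
  · have : Unique (Generators G) := uniqueOfSubsingleton (Classical.arbitrary _)
    exact ⟨(toFreeGroup G).trans FreeGroup.mulEquivIntOfUnique⟩

end IsFreeGroup

namespace FreeGroup

variable {α : Type*}

theorem exists_zpow_eq_zpow_of_commute {x y : FreeGroup α} (h : Commute x y) (hy : y ≠ 1) :
    ∃ m n : ℤ, m ≠ 0 ∧ x ^ m = y ^ n := by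
  let H := Subgroup.closure ({x, y} : Set (FreeGroup α))
  have : IsMulCommutative H := Subgroup.isMulCommutative_closure (by
    simp only [Set.mem_insert_iff, Set.mem_singleton_iff]
    rintro a (rfl | rfl) b (rfl | rfl)
    exacts [rfl, h.eq, h.symm.eq, rfl])
  have := IsFreeGroup.isCyclic_of_isMulCommutative H
  obtain ⟨z, hz⟩ := IsCyclic.exists_generator (α := H)
  obtain ⟨k, hk⟩ := Subgroup.mem_zpowers_iff.mp (hz ⟨x, Subgroup.subset_closure (by simp)⟩)
  obtain ⟨l, hl⟩ := Subgroup.mem_zpowers_iff.mp (hz ⟨y, Subgroup.subset_closure (by simp)⟩)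
  have hk' : (z : FreeGroup α) ^ k = x := by simpa using congrArg Subtype.val hk
  have hl' : (z : FreeGroup α) ^ l = y := by simpa using congrArg Subtype.val hl
  refine ⟨l, k, fun h0 => hy ?_, ?_⟩
  · rw [← hl', h0, zpow_zero]
  · rw [← hk', ← hl', ← zpow_mul, ← zpow_mul, mul_comm]

theorem eq_one_of_forall_commute {b : FreeGroup α} (hb : ∀ g, Commute b g) {s t : α}
    (hst : s ≠ t) : b = 1 := by
  classical
  obtain ⟨m, n, hm, hs⟩ := exists_zpow_eq_zpow_of_commute (hb (of s)) (of_ne_one s)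
  obtain ⟨m', n', hm', ht⟩ := exists_zpow_eq_zpow_of_commute (hb (of t)) (of_ne_one t)
  have hst_pow : of s ^ (n * m') = of t ^ (n' * m) := by
    rw [zpow_mul, ← hs, ← zpow_mul, mul_comm, zpow_mul, ht, ← zpow_mul]
  have hn : n * m' = 0 := by
    -- compare the exponent sums of `s`
    simpa [hst.symm] using congrArg (lift (Pi.mulSingle s (Multiplicative.ofAdd (1 : ℤ)))) hst_pow
  rw [← IsMulTorsionFree.zpow_eq_one_iff_left hm, hs, (mul_eq_zero.mp hn).resolve_right hm',
    zpow_zero]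

end FreeGroup

theorem IsFreeGroup.isMulCommutative_of_commute {G : Type*} [Group G] [IsFreeGroup G] {b : G}
    (hb : b ≠ 1) (hcomm : ∀ g, Commute b g) : IsMulCommutative G := by
  let e := IsFreeGroup.toFreeGroup G
  have : Subsingleton (IsFreeGroup.Generators G) := ⟨fun _ _ => by_contra fun hst =>
    hb <| e.injective <| by
      rw [map_one]
      exact FreeGroup.eq_one_of_forall_commute
        (fun g => by simpa using (hcomm (e.symm g)).map e) hst⟩
  have := isCyclic_of_surjective e.symm e.symm.surjective
  infer_instance

namespace FreeGroup

variable {α : Type*}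

open Subgroup

theorem commTransitive : CommTransitive (FreeGroup α) := by
  intro a b c hb hab hbc
  have : IsMulCommutative (centralizer {b}) :=
    IsFreeGroup.isMulCommutative_of_commute (b := ⟨b, mem_centralizer_singleton_iff.mpr rfl⟩)
      (by simpa using hb) fun g => Subtype.ext (mem_centralizer_singleton_iff.mp g.2).symm
  exact congrArg Subtype.val
    (mul_comm' (⟨a, mem_centralizer_singleton_iff.mpr hab⟩ : centralizer {b})
      ⟨c, mem_centralizer_singleton_iff.mpr hbc.symm⟩)

theorem exists_centralizer_eq_zpowers {x : FreeGroup α} (hx : x ≠ 1) :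
    ∃ z, centralizer {x} = zpowers z := by
  have : IsMulCommutative (centralizer {x}) :=
    .of_setLike_mul_comm fun a ha c hc => commTransitive a x c hx
      (mem_centralizer_singleton_iff.mp ha) (mem_centralizer_singleton_iff.mp hc).symm
  obtain ⟨z, hz⟩ := (centralizer {x}).isCyclic_iff_exists_zpowers_eq_top.mp
    (IsFreeGroup.isCyclic_of_isMulCommutative (centralizer {x}))
  exact ⟨z, hz.symm⟩

theorem commute_of_commute_pow {y z : FreeGroup α} {n : ℕ} (hn : n ≠ 0)
    (h : Commute (y ^ n) z) : Commute y z := by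
  by_cases hy : y ^ n = 1
  · rw [(pow_eq_one_iff_left hn).mp hy]
    exact Commute.one_left z
  · exact commTransitive y (y ^ n) z hy (Commute.self_pow y n).eq h.eq

theorem commute_of_commute_conj {x y : FreeGroup α} (hx : x ≠ 1)
    (h : Commute x (y * x * y⁻¹)) : Commute x y := by
  obtain ⟨z, hz⟩ := exists_centralizer_eq_zpowers hx
  have mem_iff (w : FreeGroup α) : w ∈ zpowers z ↔ Commute w x := by
    rw [← hz, mem_centralizer_singleton_iff]
    rfl
  have hzx : Commute z x := (mem_iff z).mp (mem_zpowers z)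
  have hz1 : z ≠ 1 := by
    rintro rfl
    exact hx (by simpa using (mem_iff x).mpr (Commute.refl x))
  -- Conjugation by `v` maps the centralizer `⟨z⟩` of `x` onto that of `v x v⁻¹`, which is `⟨z⟩`
  -- again by commutative transitivity.
  have conj_mem (v : FreeGroup α) (hv : Commute x (v * x * v⁻¹)) : v * z * v⁻¹ ∈ zpowers z :=
    (mem_iff _).mpr <|
      commTransitive _ (v * x * v⁻¹) x (by simpa using hx) (hzx.conj v).eq hv.symm.eq
  obtain ⟨r, hr⟩ := mem_zpowers_iff.mp (conj_mem y h)
  obtain ⟨r', hr'⟩ :=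
    mem_zpowers_iff.mp (conj_mem y⁻¹ (by simpa [mul_assoc] using (h.conj y⁻¹).symm))
  have hrr' : r * r' = 1 := by
    refine injective_zpow_iff_not_isOfFinOrder.mpr (not_isOfFinOrder_of_isMulTorsionFree hz1) ?_
    calc z ^ (r * r') = (y * z * y⁻¹) ^ r' := by rw [zpow_mul, hr]
      _ = y * (y⁻¹ * z * y⁻¹⁻¹) * y⁻¹ := by rw [conj_zpow, hr']
      _ = z ^ (1 : ℤ) := by group
  have hy2 : Commute (y ^ 2) z := by
    have hrr : r * r = 1 := by
      rcases Int.eq_one_or_neg_one_of_mul_eq_one hrr' with rfl | rfl <;> rfl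
    have : y ^ 2 * z * (y ^ 2)⁻¹ = z := by
      calc y ^ 2 * z * (y ^ 2)⁻¹ = y * (y * z * y⁻¹) * y⁻¹ := by rw [pow_two]; group
        _ = z := by rw [← hr, ← conj_zpow, ← hr, ← zpow_mul, hrr, zpow_one]
    exact mul_inv_eq_iff_eq_mul.mp this
  obtain ⟨k, rfl⟩ := mem_zpowers_iff.mp ((mem_iff x).mpr (Commute.refl x))
  exact ((commute_of_commute_pow two_ne_zero hy2).zpow_right k).symm

end FreeGroup

theorem Int.exists_add_mul_ne_zero {ι : Type*} (s : Finset ι) (a b : ι → ℤ)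
    (h : ∀ i ∈ s, a i ≠ 0 ∨ b i ≠ 0) : ∃ M : ℤ, ∀ i ∈ s, a i + M * b i ≠ 0 := by
  set M := 1 + ∑ j ∈ s, |a j|
  refine ⟨M, fun i hi hzero => ?_⟩
  have hM : |a i| < M := by
    linarith [Finset.single_le_sum (fun j _ => abs_nonneg (a j)) hi]
  rcases eq_or_ne (b i) 0 with hb | hb
  · exact (h i hi).resolve_right (not_not.mpr hb) (by simpa [hb] using hzero)
  · have hM0 : 0 ≤ M := by positivity
    have : M ≤ |a i| :=
      calc M ≤ M * |b i| := le_mul_of_one_le_right hM0 (Int.one_le_abs hb)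
        _ = |a i| := by
          rw [← abs_of_nonneg hM0, ← abs_mul, ← abs_neg, show -(M * b i) = a i by linarith]
    linarith

section

variable {G : Type*} [Group G]

open Subgroup
open scoped commutatorElement

theorem exists_monoidHom_int_forall_ne_one (s : Finset G)
    (h : ∀ g ∈ s, ∃ χ : G →* Multiplicative ℤ, χ g ≠ 1) :
    ∃ χ : G →* Multiplicative ℤ, ∀ g ∈ s, χ g ≠ 1 := by
  classical
  induction s using Finset.induction_on with
  | empty => exact ⟨1, by simp⟩
  | insert x s _ ih =>
    obtain ⟨χ, hχ⟩ := ih fun g hg => h g (Finset.mem_insert_of_mem hg)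
    obtain ⟨χ₀, hχ₀⟩ := h x (Finset.mem_insert_self x s)
    obtain ⟨M, hM⟩ := Int.exists_add_mul_ne_zero (insert x s)
      (fun g => (χ g).toAdd) (fun g => (χ₀ g).toAdd) (by
        intro g hg
        rcases Finset.mem_insert.mp hg with rfl | hg
        · exact .inr (by simpa using hχ₀)
        · exact .inl (by simpa using hχ g hg))
    refine ⟨χ * χ₀ ^ M, fun g hg hone => hM g hg ?_⟩
    simpa [mul_comm M] using congrArg Multiplicative.toAdd hone

theorem FullyResiduallyFree.residuallyFree (hG : FullyResiduallyFree G) : ResiduallyFree G :=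
  fun g hg => (hG 1 (fun _ => g) fun _ => hg).imp fun _ ⟨f, hf⟩ => ⟨f, hf 0⟩

theorem FullyResiduallyFree.commTransitive (hG : FullyResiduallyFree G) : CommTransitive G := by
  intro a b c hb hab hbc
  by_contra hac
  have hac' : ⁅a, c⁆ ≠ 1 := mt commutatorElement_eq_one_iff_commute.mp hac
  obtain ⟨α, f, hf⟩ := hG 2 ![b, ⁅a, c⁆] (by simp [Fin.forall_fin_two, hb, hac'])
  refine hf 1 ?_
  simp only [Matrix.cons_val_one, Matrix.cons_val_zero, map_commutatorElement,
    commutatorElement_eq_one_iff_commute]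
  exact FreeGroup.commTransitive _ (f b) _ (hf 0) (by simp [← map_mul, hab])
    (by simp [← map_mul, hbc])

namespace ResiduallyFree

theorem commute_of_forall_monoidHom (hG : ResiduallyFree G) {x y : G}
    (h : ∀ (α : Type) (f : G →* FreeGroup α), Commute (f x) (f y)) : Commute x y := by
  by_contra hxy
  obtain ⟨α, f, hf⟩ := hG ⁅x, y⁆ (mt commutatorElement_eq_one_iff_commute.mp hxy)
  exact hf (by rw [map_commutatorElement, commutatorElement_eq_one_iff_commute]; exact h α f)

theorem commute_of_commute_conj (hG : ResiduallyFree G) {x y : G}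
    (h : Commute x (y * x * y⁻¹)) : Commute x y := by
  refine hG.commute_of_forall_monoidHom fun α f => ?_
  rcases eq_or_ne (f x) 1 with hx | hx
  · rw [hx]
    exact Commute.one_left _
  · exact FreeGroup.commute_of_commute_conj hx (by simpa using h.map f)

theorem exists_monoidHom_int_ne_one [IsMulCommutative G] (hG : ResiduallyFree G) {g : G}
    (hg : g ≠ 1) : ∃ χ : G →* Multiplicative ℤ, χ g ≠ 1 := by
  obtain ⟨α, f, hf⟩ := hG g hg
  have hfg : f.rangeRestrict g ≠ 1 := fun h => hf (by simpa using congrArg Subtype.val h)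
  have : Nontrivial f.range := nontrivial_of_ne _ _ hfg
  obtain ⟨e⟩ := IsFreeGroup.nonempty_mulEquiv_int f.range
  exact ⟨e.toMonoidHom.comp f.rangeRestrict, by simpa using hfg⟩

theorem fullyResiduallyFree_of_isMulCommutative [IsMulCommutative G] (hG : ResiduallyFree G) :
    FullyResiduallyFree G := by
  classical
  intro n g hg
  obtain ⟨χ, hχ⟩ := exists_monoidHom_int_forall_ne_one (Finset.univ.image g) (by
    simpa using fun i => hG.exists_monoidHom_int_ne_one (hg i))
  let ι : Multiplicative ℤ ≃* FreeGroup Unit := FreeGroup.mulEquivIntOfUnique.symm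
  exact ⟨Unit, ι.toMonoidHom.comp χ, fun i => by simpa using hχ (g i) (by simp)⟩

end ResiduallyFree

theorem CommTransitive.exists_not_commute (hCT : CommTransitive G) (hG : ¬IsMulCommutative G)
    {x : G} (hx : x ≠ 1) : ∃ t, ¬Commute x t := by
  by_contra! hcentral
  exact hG (isMulCommutative_iff.mpr fun p q => hCT p x q hx (hcentral p).eq.symm (hcentral q).eq)

theorem CommTransitive.exists_not_commute_conj (hCT : CommTransitive G) (hRF : ResiduallyFree G)
    (hG : ¬IsMulCommutative G) {x y : G} (hx : x ≠ 1) (hy : y ≠ 1) :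
    ∃ t, ¬Commute x (t * y * t⁻¹) := by
  by_cases hxy : Commute x y
  · obtain ⟨t, hxt⟩ := hCT.exists_not_commute hG hx
    refine ⟨t, fun hxty => hxt ?_⟩
    have hyty : Commute y (t * y * t⁻¹) := hCT y x _ hx hxy.symm.eq hxty.eq
    exact hCT x y t hy hxy.eq (hRF.commute_of_commute_conj hyty).eq
  · exact ⟨1, by simpa using hxy⟩

theorem CommTransitive.exists_ne_one_mem_normalClosure (hCT : CommTransitive G)
    (hRF : ResiduallyFree G) (hG : ¬IsMulCommutative G) (s : Finset G) (hs : ∀ g ∈ s, g ≠ 1) :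
    ∃ u ≠ 1, ∀ g ∈ s, u ∈ normalClosure {g} := by
  classical
  induction s using Finset.induction_on with
  | empty =>
    obtain ⟨p, q, hpq⟩ : ∃ p q : G, ¬Commute p q := by
      by_contra! h
      exact hG (isMulCommutative_iff.mpr fun p q => (h p q).eq)
    exact ⟨⁅p, q⁆, mt commutatorElement_eq_one_iff_commute.mp hpq, by simp⟩
  | insert x s _ ih =>
    obtain ⟨u, hu, hus⟩ := ih fun g hg => hs g (Finset.mem_insert_of_mem hg)
    obtain ⟨t, ht⟩ := hCT.exists_not_commute_conj hRF hG (hs x (Finset.mem_insert_self x s)) hu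
    refine ⟨⁅x, t * u * t⁻¹⁆, mt commutatorElement_eq_one_iff_commute.mp ht, fun g hg => ?_⟩
    rcases Finset.mem_insert.mp hg with rfl | hg
    · exact commutator_le_left _ _
        (commutator_mem_commutator (subset_normalClosure rfl) (mem_top _))
    · have : t * u * t⁻¹ ∈ normalClosure {g} :=
        (normalClosure_normal (s := {g})).conj_mem u (hus g hg) t
      exact commutator_le_right _ _ (commutator_mem_commutator (mem_top x) this)

theorem ResiduallyFree.fullyResiduallyFree (hRF : ResiduallyFree G) (hCT : CommTransitive G) :
    FullyResiduallyFree G := by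
  classical
  by_cases hG : IsMulCommutative G
  · exact hRF.fullyResiduallyFree_of_isMulCommutative
  intro n g hg
  obtain ⟨u, hu, hug⟩ :=
    hCT.exists_ne_one_mem_normalClosure hRF hG (Finset.univ.image g) (by simpa using hg)
  obtain ⟨α, f, hf⟩ := hRF u hu
  refine ⟨α, f, fun i hgi => hf ?_⟩
  have : normalClosure {g i} ≤ f.ker :=
    normalClosure_le_normal (Set.singleton_subset_iff.mpr hgi)
  exact this (hug (g i) (by simp))

end

theorem frf_iff_rf_and_commTransitive (G : Type*) [Group G] :
    (FullyResiduallyFree G → ResiduallyFree G) ∧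
      (ResiduallyFree G → (FullyResiduallyFree G ↔ CommTransitive G)) :=
  ⟨FullyResiduallyFree.residuallyFree, fun hRF =>
    ⟨FullyResiduallyFree.commTransitive, hRF.fullyResiduallyFree⟩⟩
end
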